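/- Let Σ be a real symmetric positive semidefinite d×d matrix all of whose diagonal entries are strictly positive, and let D(Σ) be the diagonal matrix with the same diagonal as Σ. Then P := D(Σ)^{−1/2} Σ D(Σ)^{−1/2} is a correlation matrix, and for every d×d correlation matrix Q one has B(Σ, P) ≤ B(Σ, Q). In other words, the symmetric normalization P minimizes the Bures–Wasserstein distance from Σ over the set of correlation matrices. -/

import Mathlib

open Matrix Real

/-- The positive semidefinite square root of a positive semidefinite real matrix
(junk value `0` on matrices that are not positive semidefinite). -/
noncomputable def msqrt {d : ℕ} (A : Matrix (Fin d) (Fin d) ℝ) : Matrix (Fin d) (Fin d) ℝ :=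
  open scoped Classical in
  if h : A.PosSemidef then
    h.1.eigenvectorUnitary.1 * diagonal ((↑) ∘ Real.sqrt ∘ h.1.eigenvalues) *
      (star h.1.eigenvectorUnitary : Matrix (Fin d) (Fin d) ℝ)
  else 0

/-- The squared Bures–Wasserstein distance
`B²(S,Q) = tr S + tr Q − 2 tr((S^{1/2} Q S^{1/2})^{1/2})`. -/
noncomputable def sqB {d : ℕ} (S Q : Matrix (Fin d) (Fin d) ℝ) : ℝ :=
  S.trace + Q.trace - 2 * (msqrt (msqrt S * Q * msqrt S)).trace

/-- The Bures–Wasserstein distance `B(S,Q)`. -/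
noncomputable def bw {d : ℕ} (S Q : Matrix (Fin d) (Fin d) ℝ) : ℝ :=
  Real.sqrt (sqB S Q)

/-- The Frobenius (Hilbert–Schmidt) norm of a matrix. -/
noncomputable def frobNorm {d : ℕ} (A : Matrix (Fin d) (Fin d) ℝ) : ℝ :=
  Real.sqrt (∑ i, ∑ j, (A i j) ^ 2)

/-- The spectral (`ℓ²`-operator) norm of a matrix. -/
noncomputable def opNorm {d : ℕ} (A : Matrix (Fin d) (Fin d) ℝ) : ℝ :=
  ‖Matrix.toEuclideanCLM (𝕜 := ℝ) A‖

/-- A correlation matrix: real symmetric positive semidefinite with unit diagonal. -/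
def IsCorrMat {d : ℕ} (A : Matrix (Fin d) (Fin d) ℝ) : Prop :=
  A.PosSemidef ∧ ∀ i, A i i = 1

/-- The 2×2 correlation matrix with off-diagonal entry `ρ`. -/
def corr2 (ρ : ℝ) : Matrix (Fin 2) (Fin 2) ℝ := !![1, ρ; ρ, 1]

/-- The Gaussian optimal transport matrix `T_Σ^Q = Σ^{-1/2} (Σ^{1/2} Q Σ^{1/2})^{1/2} Σ^{-1/2}`. -/
noncomputable def otMap {d : ℕ} (S Q : Matrix (Fin d) (Fin d) ℝ) : Matrix (Fin d) (Fin d) ℝ :=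
  (msqrt S)⁻¹ * msqrt (msqrt S * Q * msqrt S) * (msqrt S)⁻¹

/-- Symmetric normalization `D(Σ)^{-1/2} Σ D(Σ)^{-1/2}` of a matrix by its diagonal. -/
noncomputable def symNormalize {d : ℕ} (S : Matrix (Fin d) (Fin d) ℝ) :
    Matrix (Fin d) (Fin d) ℝ :=
  Matrix.diagonal (fun i => (Real.sqrt (S i i))⁻¹) * S *
    Matrix.diagonal (fun i => (Real.sqrt (S i i))⁻¹)

/-- The square root of a PSD matrix (as in the old Mathlib `Matrix.PosSemidef.sqrt`). -/
noncomputable def Matrix.PosSemidef.sqrt {d : ℕ} {A : Matrix (Fin d) (Fin d) ℝ}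
    (h : A.PosSemidef) : Matrix (Fin d) (Fin d) ℝ :=
  h.1.eigenvectorUnitary.1 * diagonal ((↑) ∘ Real.sqrt ∘ h.1.eigenvalues) *
    (star h.1.eigenvectorUnitary : Matrix (Fin d) (Fin d) ℝ)

open scoped MatrixOrder in
theorem Matrix.PosSemidef.sqrt_eq_cfcSqrt {d : ℕ} {A : Matrix (Fin d) (Fin d) ℝ}
    (h : A.PosSemidef) : h.sqrt = CFC.sqrt A := by
  have he : ∀ i, max (h.1.eigenvalues i) 0 = h.1.eigenvalues i :=
    fun i => max_eq_left (h.eigenvalues_nonneg i)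
  rw [CFC.sqrt_eq_cfc, cfc_nnreal_eq_real _ A h.nonneg, h.1.cfc_eq, Matrix.IsHermitian.cfc,
    Unitary.conjStarAlgAut_apply]
  simp [Function.comp_def, he, Matrix.PosSemidef.sqrt]

open scoped MatrixOrder in
theorem Matrix.PosSemidef.posSemidef_sqrt {d : ℕ} {A : Matrix (Fin d) (Fin d) ℝ}
    (h : A.PosSemidef) : h.sqrt.PosSemidef := by
  rw [h.sqrt_eq_cfcSqrt]
  exact (CFC.sqrt_nonneg A).posSemidef

open scoped MatrixOrder in
theorem Matrix.PosSemidef.sqrt_mul_self {d : ℕ} {A : Matrix (Fin d) (Fin d) ℝ}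
    (h : A.PosSemidef) : h.sqrt * h.sqrt = A := by
  rw [h.sqrt_eq_cfcSqrt]
  exact CFC.sqrt_mul_sqrt_self A h.nonneg

open scoped MatrixOrder in
theorem Matrix.PosSemidef.eq_sqrt_of_sq_eq {d : ℕ} {A : Matrix (Fin d) (Fin d) ℝ}
    (hA : A.PosSemidef) {B : Matrix (Fin d) (Fin d) ℝ} (hB : B.PosSemidef) (hAB : A ^ 2 = B) :
    A = hB.sqrt := by
  rw [hB.sqrt_eq_cfcSqrt, eq_comm, CFC.sqrt_eq_iff B A hB.nonneg hA.nonneg, ← sq]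
  exact hAB

namespace BWProj

variable {d : ℕ}

lemma psd_diag_nonneg {A : Matrix (Fin d) (Fin d) ℝ} (hA : A.PosSemidef)
    (i : Fin d) : 0 ≤ A i i := by
  exact hA.diag_nonneg

lemma herm_symm {A : Matrix (Fin d) (Fin d) ℝ} (hA : A.IsHermitian) (i j : Fin d) :
    A j i = A i j := by
  conv_lhs => rw [← hA]
  simp [conjTranspose_apply]

/-- Key inequality: `tr((S^{1/2} Q S^{1/2})^{1/2}) ≤ ∑ √(S i i)` for `Q` with unit diagonal. -/
lemma trace_sqrt_le {S Q : Matrix (Fin d) (Fin d) ℝ}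
    (hS : S.PosSemidef) (hQ : Q.PosSemidef) (hQd : ∀ i, Q i i = 1)
    (hM : (hS.sqrt * Q * hS.sqrt).PosSemidef) :
    hM.sqrt.trace ≤ ∑ i, Real.sqrt (S i i) := by
  classical
  set R := hS.sqrt with hRdef
  set T := hQ.sqrt with hTdef
  have hR : R.PosSemidef := hS.posSemidef_sqrt
  have hT : T.PosSemidef := hQ.posSemidef_sqrt
  have hRR : R * R = S := hS.sqrt_mul_self
  have hTT : T * T = Q := hQ.sqrt_mul_self
  have hRH : Rᴴ = R := hR.1
  have hTH : Tᴴ = T := hT.1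
  set X := T * R with hXdef
  have hXX : Xᴴ * X = R * Q * R := by
    rw [hXdef, conjTranspose_mul, hRH, hTH, Matrix.mul_assoc,
      ← Matrix.mul_assoc T T R, hTT, ← Matrix.mul_assoc]
  -- spectral data of M := R * Q * R
  set U : Matrix (Fin d) (Fin d) ℝ := (hM.1.eigenvectorUnitary : Matrix (Fin d) (Fin d) ℝ) with hUdef
  set μ : Fin d → ℝ := hM.1.eigenvalues with hμdef
  have hμnn : ∀ k, 0 ≤ μ k := hM.eigenvalues_nonneg
  have hUU : star U * U = 1 :=
    mem_unitaryGroup_iff'.mp (hM.1.eigenvectorUnitary).2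
  have hUU' : U * star U = 1 :=
    mem_unitaryGroup_iff.mp (hM.1.eigenvectorUnitary).2
  have hc1 : ∀ A : Matrix (Fin d) (Fin d) ℝ, star U * (U * A) = A := fun A => by
    rw [← Matrix.mul_assoc, hUU, Matrix.one_mul]
  have hc2 : ∀ A : Matrix (Fin d) (Fin d) ℝ, U * (star U * A) = A := fun A => by
    rw [← Matrix.mul_assoc, hUU', Matrix.one_mul]
  have hspec : R * Q * R = U * diagonal μ * star U := by
    have h := hM.1.spectral_theorem
    simpa [RCLike.ofReal_real_eq_id] using h
  have hXXspec : Xᴴ * X = U * diagonal μ * star U := hXX.trans hspec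
  set g : Fin d → ℝ := fun k => if μ k = 0 then 0 else (Real.sqrt (μ k))⁻¹ with hgdef
  set e : Fin d → ℝ := fun k => if μ k = 0 then 0 else 1 with hedef
  set W := X * U * diagonal g with hWdef
  have hWH : Wᴴ = diagonal g * star U * Xᴴ := by
    rw [hWdef, conjTranspose_mul, conjTranspose_mul, diagonal_conjTranspose]
    simp [Matrix.star_eq_conjTranspose, Matrix.mul_assoc]
  -- W has orthonormal-or-zero columns
  have hGMG : diagonal g * diagonal μ * diagonal g = diagonal e := by
    rw [diagonal_mul_diagonal, diagonal_mul_diagonal]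
    apply congrArg Matrix.diagonal
    funext k
    simp only [Pi.mul_apply, hgdef, hedef]
    by_cases hk : μ k = 0
    · simp [hk]
    · have hpos : 0 < μ k := lt_of_le_of_ne (hμnn k) (Ne.symm hk)
      have hsq : Real.sqrt (μ k) * Real.sqrt (μ k) = μ k := Real.mul_self_sqrt (hμnn k)
      have hne : Real.sqrt (μ k) ≠ 0 := ne_of_gt (Real.sqrt_pos.mpr hpos)
      rw [if_neg hk, if_neg hk, ← hsq]
      field_simp
      rw [Real.sq_sqrt (sq_nonneg (Real.sqrt (μ k)))]
  have hWW : Wᴴ * W = diagonal e := by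
    have h1 : Wᴴ * W = diagonal g * star U * (Xᴴ * X) * U * diagonal g := by
      rw [hWH, hWdef]; simp only [Matrix.mul_assoc]
    rw [h1, hXXspec]
    have h2 : diagonal g * star U * (U * diagonal μ * star U) * U * diagonal g
        = diagonal g * diagonal μ * diagonal g := by
      simp only [Matrix.mul_assoc, hc1]
    rw [h2, hGMG]
  have hGE : diagonal g * diagonal e = diagonal g := by
    rw [diagonal_mul_diagonal]
    apply congrArg Matrix.diagonal
    funext k
    simp only [Pi.mul_apply, hgdef, hedef]
    by_cases hk : μ k = 0 <;> simp [hk]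
  have hWE : W * diagonal e = W := by
    rw [hWdef]; simp only [Matrix.mul_assoc, hGE]
  have hGD : diagonal g * diagonal μ = diagonal (fun k => Real.sqrt (μ k)) := by
    rw [diagonal_mul_diagonal]
    apply congrArg Matrix.diagonal
    funext k
    simp only [Pi.mul_apply, hgdef]
    by_cases hk : μ k = 0
    · simp [hk]
    · have hpos : 0 < μ k := lt_of_le_of_ne (hμnn k) (Ne.symm hk)
      have hne : Real.sqrt (μ k) ≠ 0 := ne_of_gt (Real.sqrt_pos.mpr hpos)
      have hsq : Real.sqrt (μ k) * Real.sqrt (μ k) = μ k := Real.mul_self_sqrt (hμnn k)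
      rw [if_neg hk, inv_mul_eq_div, div_eq_iff hne]
      exact hsq.symm
  -- the square root of M
  have hDsq : diagonal (fun k => Real.sqrt (μ k)) * diagonal (fun k => Real.sqrt (μ k))
      = diagonal μ := by
    rw [diagonal_mul_diagonal]
    apply congrArg Matrix.diagonal
    funext k
    exact Real.mul_self_sqrt (hμnn k)
  have hNpsd : (U * (diagonal (fun k => Real.sqrt (μ k)) * star U)).PosSemidef := by
    have hdg : (diagonal (fun k => Real.sqrt (μ k)) : Matrix (Fin d) (Fin d) ℝ).PosSemidef :=
      Matrix.PosSemidef.diagonal fun k => Real.sqrt_nonneg (μ k)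
    have h := hdg.mul_mul_conjTranspose_same U
    rw [Matrix.star_eq_conjTranspose] at *
    rw [← Matrix.mul_assoc] at *
    exact h
  have hsqrtN : U * (diagonal (fun k => Real.sqrt (μ k)) * star U) = hM.sqrt := by
    apply hNpsd.eq_sqrt_of_sq_eq hM
    rw [pow_two]
    calc U * (diagonal (fun k => Real.sqrt (μ k)) * star U)
          * (U * (diagonal (fun k => Real.sqrt (μ k)) * star U))
        = U * (diagonal (fun k => Real.sqrt (μ k)) *
            (star U * (U * (diagonal (fun k => Real.sqrt (μ k)) * star U)))) := by
          simp only [Matrix.mul_assoc]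
      _ = U * (diagonal (fun k => Real.sqrt (μ k)) *
            (diagonal (fun k => Real.sqrt (μ k)) * star U)) := by rw [hc1]
      _ = U * ((diagonal (fun k => Real.sqrt (μ k)) *
            diagonal (fun k => Real.sqrt (μ k))) * star U) := by
          simp only [Matrix.mul_assoc]
      _ = U * (diagonal μ * star U) := by rw [hDsq]
      _ = R * Q * R := by rw [hspec]; simp only [Matrix.mul_assoc]
  have hNid : hM.sqrt = U * Wᴴ * X := by
    rw [← hsqrtN]
    calc U * (diagonal (fun k => Real.sqrt (μ k)) * star U)
        = U * (diagonal g * (diagonal μ * star U)) := by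
          rw [← hGD]; simp only [Matrix.mul_assoc]
      _ = U * (diagonal g * (star U * (U * (diagonal μ * star U)))) := by rw [hc1]
      _ = U * (diagonal g * (star U * (Xᴴ * X))) := by
          rw [hXXspec]; simp only [Matrix.mul_assoc]
      _ = U * Wᴴ * X := by rw [hWH]; simp only [Matrix.mul_assoc]
  -- rewrite as (U Wᴴ T) * R and take traces
  set Y := U * Wᴴ * T with hYdef
  have hNid' : hM.sqrt = Y * R := by
    rw [hNid, hYdef, hXdef]; simp only [Matrix.mul_assoc]
  have htr : hM.sqrt.trace = (R * Y).trace := by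
    rw [hNid', Matrix.trace_mul_comm]
  -- P := W Wᴴ is an orthogonal projection
  set P := W * Wᴴ with hPdef
  have hPH : Pᴴ = P := by
    rw [hPdef, conjTranspose_mul, conjTranspose_conjTranspose]
  have hPP : P * P = P := by
    rw [hPdef]
    calc W * Wᴴ * (W * Wᴴ) = W * (Wᴴ * W) * Wᴴ := by simp only [Matrix.mul_assoc]
      _ = W * diagonal e * Wᴴ := by rw [hWW]
      _ = W * Wᴴ := by rw [hWE]
  have h1mP : (1 - P).PosSemidef := by
    have h := posSemidef_conjTranspose_mul_self (1 - P)
    have heq : (1 - P)ᴴ * (1 - P) = 1 - P := by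
      rw [conjTranspose_sub, conjTranspose_one, hPH]
      have expand : (1 - P) * (1 - P) = 1 - P - P + P * P := by noncomm_ring
      rw [expand, hPP]
      abel
    rwa [heq] at h
  have hTPT : (T * (1 - P) * T).PosSemidef := by
    have h := h1mP.mul_mul_conjTranspose_same T
    rwa [hTH] at h
  -- Yᴴ * Y = T * P * T
  have hYY : Yᴴ * Y = T * P * T := by
    rw [hYdef, hPdef]
    rw [conjTranspose_mul, conjTranspose_mul, conjTranspose_conjTranspose, hTH]
    calc T * (W * Uᴴ) * (U * Wᴴ * T)
        = T * (W * (star U * (U * (Wᴴ * T)))) := by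
          simp only [Matrix.star_eq_conjTranspose, Matrix.mul_assoc]
      _ = T * (W * (Wᴴ * T)) := by rw [hc1]
      _ = T * (W * Wᴴ) * T := by simp only [Matrix.mul_assoc]
  -- column norms of Y are at most 1
  have hcol : ∀ i, ∑ j, (Y j i) ^ 2 ≤ 1 := by
    intro i
    have h1 : ∑ j, (Y j i) ^ 2 = (Yᴴ * Y) i i := by
      simp [Matrix.mul_apply, conjTranspose_apply, sq]
    have h2 : (T * (1 - P) * T) i i = Q i i - (T * P * T) i i := by
      have : T * (1 - P) * T = T * T - T * P * T := by
        rw [Matrix.mul_sub, Matrix.mul_one, Matrix.sub_mul]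
      rw [this, Matrix.sub_apply, hTT]
    have h3 : 0 ≤ (T * (1 - P) * T) i i := psd_diag_nonneg hTPT i
    rw [h1, hYY]
    rw [h2] at h3
    rw [hQd i] at h3
    linarith
  -- row norms of R
  have hrow : ∀ i, ∑ j, (R i j) ^ 2 = S i i := by
    intro i
    have : (R * R) i i = ∑ j, R i j * R j i := Matrix.mul_apply
    rw [hRR] at this
    rw [this]
    refine Finset.sum_congr rfl fun j _ => ?_
    rw [herm_symm hR.1, sq]
  -- entrywise Cauchy-Schwarz bound
  have hentry : ∀ i, (R * Y) i i ≤ Real.sqrt (S i i) := by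
    intro i
    have hcs := Finset.sum_mul_sq_le_sq_mul_sq Finset.univ (fun j => R i j) (fun j => Y j i)
    have hSnn : 0 ≤ S i i := psd_diag_nonneg hS i
    have h1 : (R * Y) i i = ∑ j, R i j * Y j i := Matrix.mul_apply
    have h2 : ((R * Y) i i) ^ 2 ≤ S i i * 1 := by
      rw [h1]
      refine hcs.trans ?_
      rw [hrow i]
      exact mul_le_mul_of_nonneg_left (hcol i) hSnn
    calc (R * Y) i i ≤ |(R * Y) i i| := le_abs_self _
      _ = Real.sqrt (((R * Y) i i) ^ 2) := (Real.sqrt_sq_eq_abs _).symm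
      _ ≤ Real.sqrt (S i i * 1) := Real.sqrt_le_sqrt h2
      _ = Real.sqrt (S i i) := by rw [mul_one]
  rw [htr]
  have : (R * Y).trace = ∑ i, (R * Y) i i := by
    simp [Matrix.trace, Matrix.diag]
  rw [this]
  exact Finset.sum_le_sum fun i _ => hentry i




end BWProj

/-- Let `Σ` be real symmetric positive semidefinite with strictly positive
diagonal entries.  Then the symmetric normalization `P = D(Σ)^{−1/2} Σ D(Σ)^{−1/2}` is a
correlation matrix, and it minimizes the Bures–Wasserstein distance from `Σ` over all
correlation matrices: `B(Σ, P) ≤ B(Σ, Q)` for every correlation matrix `Q`. -/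
theorem symNormalize_is_bw_projection {d : ℕ} (S : Matrix (Fin d) (Fin d) ℝ)
    (hS : S.PosSemidef) (hdiag : ∀ i, 0 < S i i) :
    IsCorrMat (symNormalize S) ∧
      ∀ Q : Matrix (Fin d) (Fin d) ℝ, IsCorrMat Q → bw S (symNormalize S) ≤ bw S Q := by
  classical
  set Dm : Matrix (Fin d) (Fin d) ℝ := diagonal (fun i => (Real.sqrt (S i i))⁻¹) with hDmdef
  have hDmH : Dmᴴ = Dm := by
    rw [hDmdef, diagonal_conjTranspose]
    congr 1
  have hsymN : symNormalize S = Dm * S * Dm := rfl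
  -- Part 1 : `symNormalize S` is a correlation matrix
  have hPsd : (symNormalize S).PosSemidef := by
    rw [hsymN]
    have h := hS.mul_mul_conjTranspose_same Dm
    rwa [hDmH] at h
  have hPdiag : ∀ i, (symNormalize S) i i = 1 := by
    intro i
    have hs : Real.sqrt (S i i) * Real.sqrt (S i i) = S i i :=
      Real.mul_self_sqrt (hdiag i).le
    have hne : Real.sqrt (S i i) ≠ 0 := ne_of_gt (Real.sqrt_pos.mpr (hdiag i))
    rw [hsymN, hDmdef, Matrix.mul_diagonal, Matrix.diagonal_mul]
    field_simp
    rw [sq, hs]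
  have hCorr : IsCorrMat (symNormalize S) := ⟨hPsd, hPdiag⟩
  refine ⟨hCorr, fun Q hQ => ?_⟩
  -- Part 2 : minimality
  have hmS : msqrt S = hS.sqrt := dif_pos hS
  set R := hS.sqrt with hRdef
  have hR : R.PosSemidef := hS.posSemidef_sqrt
  have hRH : Rᴴ = R := hR.1
  have hRR : R * R = S := hS.sqrt_mul_self
  -- the two middle matrices are PSD
  have hMP : (R * symNormalize S * R).PosSemidef := by
    have h := hCorr.1.mul_mul_conjTranspose_same R
    rwa [hRH] at h
  have hMQ : (R * Q * R).PosSemidef := by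
    have h := hQ.1.mul_mul_conjTranspose_same R
    rwa [hRH] at h
  have hmP : msqrt (msqrt S * symNormalize S * msqrt S) = hMP.sqrt := by
    rw [hmS]; exact dif_pos hMP
  have hmQ : msqrt (msqrt S * Q * msqrt S) = hMQ.sqrt := by
    rw [hmS]; exact dif_pos hMQ
  -- trace of sqrt for the projection candidate: exact value
  have hDmPsd : Dm.PosSemidef := by
    rw [hDmdef]
    exact Matrix.PosSemidef.diagonal fun i => inv_nonneg.mpr (Real.sqrt_nonneg _)
  set A := R * Dm * R with hAdef
  have hA : A.PosSemidef := by
    have h := hDmPsd.mul_mul_conjTranspose_same R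
    rwa [hRH] at h
  have hmul : ∀ Z : Matrix (Fin d) (Fin d) ℝ, R * (R * Z) = S * Z := fun Z => by
    rw [← Matrix.mul_assoc, hRR]
  have hsq : A ^ 2 = R * symNormalize S * R := by
    rw [pow_two, hAdef, hsymN]
    calc R * Dm * R * (R * Dm * R)
        = R * (Dm * (R * (R * (Dm * R)))) := by simp only [Matrix.mul_assoc]
      _ = R * (Dm * (S * (Dm * R))) := by rw [hmul]
      _ = R * (Dm * S * Dm) * R := by simp only [Matrix.mul_assoc]
  have hAsqrt : A = hMP.sqrt := hA.eq_sqrt_of_sq_eq hMP hsq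
  have htrA : A.trace = ∑ i, Real.sqrt (S i i) := by
    have h1 : A.trace = (S * Dm).trace := by
      rw [hAdef, Matrix.trace_mul_comm, ← Matrix.mul_assoc, hRR]
    rw [h1]
    have h2 : (S * Dm).trace = ∑ i, (S * Dm) i i := by
      simp [Matrix.trace, Matrix.diag]
    rw [h2]
    refine Finset.sum_congr rfl fun i _ => ?_
    rw [hDmdef, Matrix.mul_diagonal]
    have hs : Real.sqrt (S i i) * Real.sqrt (S i i) = S i i :=
      Real.mul_self_sqrt (hdiag i).le
    have hne : Real.sqrt (S i i) ≠ 0 := ne_of_gt (Real.sqrt_pos.mpr (hdiag i))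
    rw [mul_comm, inv_mul_eq_div, div_eq_iff hne]
    exact hs.symm
  -- traces of the two correlation matrices agree
  have htrP : (symNormalize S).trace = (d : ℝ) := by
    simp [Matrix.trace, Matrix.diag, hPdiag]
  have htrQ : Q.trace = (d : ℝ) := by
    simp [Matrix.trace, Matrix.diag, hQ.2]
  -- the key inequality
  have hkey : hMQ.sqrt.trace ≤ ∑ i, Real.sqrt (S i i) :=
    BWProj.trace_sqrt_le hS hQ.1 hQ.2 hMQ
  -- conclude
  apply Real.sqrt_le_sqrt
  unfold sqB
  rw [hmP, hmQ, ← hAsqrt, htrA, htrP, htrQ]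
  linarith
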